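/- Let p ∈ (1,∞), d_f ≥ 1 and β > 0, and assume G satisfies AR(d_f) and cap_{p,≤}(β). Then for every δ ∈ (0,1) there exists C(δ) > 0, depending only on δ, p, d_f, β and the constants in AR(d_f) and cap_{p,≤}(β), such that cap_p^G(B(x,δR), V ∖ B(x,R)) ≤ C(δ)·#B(x,δR)/R^β for all x ∈ V and all R ≥ δ⁻¹. -/

import Mathlib

open scoped ENNReal NNReal

namespace Paper

variable {V : Type*}

/-- A combinatorial path in a simple graph `G`: a list of at least two vertices in which
consecutive vertices are adjacent.  Paths are identified with their vertex sets. -/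
def IsPathList (G : SimpleGraph V) (θ : List V) : Prop :=
  θ.Chain' G.Adj ∧ 2 ≤ θ.length

/-- The `ρ`-length of a path `θ` (identified with its vertex set): the sum of `ρ`
over the distinct vertices of `θ`. -/
noncomputable def pathLen [DecidableEq V] (ρ : V → ℝ≥0) (θ : List V) : ℝ≥0∞ :=
  ∑ v ∈ θ.toFinset, (ρ v : ℝ≥0∞)

/-- `ρ` is admissible for the path family `Θ`. -/
def AdmissibleFor [DecidableEq V] (Θ : Set (List V)) (ρ : V → ℝ≥0) : Prop :=
  ∀ θ ∈ Θ, 1 ≤ pathLen ρ θ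

/-- The combinatorial `p`-modulus of a path family. -/
noncomputable def pMod [DecidableEq V] (p : ℝ) (Θ : Set (List V)) : ℝ≥0∞ :=
  ⨅ (ρ : V → ℝ≥0) (_ : AdmissibleFor Θ ρ), ∑' v : V, (ρ v : ℝ≥0∞) ^ p

/-- Open ball in the graph metric. -/
def gBall (G : SimpleGraph V) (x : V) (r : ℝ) : Set V :=
  {y | (G.dist x y : ℝ) < r}

/-- Closed ball in the graph metric. -/
def gcBall (G : SimpleGraph V) (x : V) (r : ℝ) : Set V :=
  {y | (G.dist x y : ℝ) ≤ r}

/-- Diameter (in `ℝ≥0∞`) of a set of vertices, with respect to the graph metric. -/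
noncomputable def gDiam (G : SimpleGraph V) (A : Set V) : ℝ≥0∞ :=
  ⨆ x ∈ A, ⨆ y ∈ A, (G.dist x y : ℝ≥0∞)

/-- Distance (in `ℝ≥0∞`) between two sets of vertices. -/
noncomputable def gDist (G : SimpleGraph V) (A B : Set V) : ℝ≥0∞ :=
  ⨅ x ∈ A, ⨅ y ∈ B, (G.dist x y : ℝ≥0∞)

/-- `PathIn G A₀ A₁ A₂ θ` : `θ` is a path lying in `A₂`, starting in `A₀` and ending in `A₁`. -/
def PathIn (G : SimpleGraph V) (A₀ A₁ A₂ : Set V) (θ : List V) : Prop :=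
  IsPathList G θ ∧ (∀ v ∈ θ, v ∈ A₂) ∧
    ∀ h : θ ≠ [], θ.head h ∈ A₀ ∧ θ.getLast h ∈ A₁

/-- A subset of the vertex set is connected if the induced subgraph is connected. -/
def ConnSubset (G : SimpleGraph V) (A : Set V) : Prop :=
  (G.induce A).Connected

/-- Local finiteness of a graph. -/
def LocFin (G : SimpleGraph V) : Prop := ∀ v : V, (G.neighborSet v).Finite

/-- `deg(G) ≤ D` : a uniform bound on vertex degrees. -/
def DegLE (G : SimpleGraph V) (D : ℕ) : Prop :=
  ∀ v : V, (G.neighborSet v).Finite ∧ (G.neighborSet v).ncard ≤ D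

/-- The combinatorial ball Loewner condition `BCL_p(ζ)` with explicit constants
`A`, `cB(⬝)`, `LB(⬝)`. -/
def BCLwith [DecidableEq V] (G : SimpleGraph V) (p ζ A : ℝ) (cB LB : ℝ → ℝ) : Prop :=
  1 ≤ A ∧ (∀ κ : ℝ, 0 < κ → 0 < cB κ ∧ 0 < LB κ) ∧
    ∀ κ : ℝ, 0 < κ → ∀ R : ℝ, 1 ≤ R →
      ENNReal.ofReal (A * R) < gDiam G Set.univ →
      ∀ x₁ x₂ : V,
        gDist G (gBall G x₁ R) (gBall G x₂ R) ≤ ENNReal.ofReal (κ * R) →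
        ENNReal.ofReal (cB κ * R ^ ζ) ≤
          pMod p {θ | PathIn G (gBall G x₁ R) (gBall G x₂ R) Set.univ θ ∧
            gDiam G {v | v ∈ θ} ≤ ENNReal.ofReal (LB κ * R)}

/-- Discrete `p`-energy (`ℝ≥0∞`-valued) of `f` over the edges with both endpoints in `A`. -/
noncomputable def pEnergy (G : SimpleGraph V) (p : ℝ) (A : Set V) (f : V → ℝ) : ℝ≥0∞ :=
  (∑' e : {e : V × V // G.Adj e.1 e.2 ∧ e.1 ∈ A ∧ e.2 ∈ A},
      ENNReal.ofReal (|f e.1.1 - f e.1.2| ^ p)) / 2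

/-- Average of `f` over the ball `B(x,R)` (with respect to the counting measure). -/
noncomputable def ballAvg (G : SimpleGraph V) (x : V) (R : ℝ) (f : V → ℝ) : ℝ :=
  (∑ᶠ y ∈ gBall G x R, f y) / ((gBall G x R).ncard : ℝ)

/-- The `(p,p)`-Poincaré inequality `PI_p(β)` with constants `CPI`, `API`. -/
def PIineq (G : SimpleGraph V) (p β CPI API : ℝ) : Prop :=
  ∀ (x : V) (R : ℝ), 1 ≤ R → ∀ f : V → ℝ,
    (∑' y : gBall G x R, ENNReal.ofReal (|f y - ballAvg G x R f| ^ p)) ≤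
      ENNReal.ofReal (CPI * R ^ β) * pEnergy G p (gBall G x (API * R)) f

/-- Truncated maximal function of the gradient: `M_R^p[f](x)`. -/
noncomputable def maxEnergy (G : SimpleGraph V) (p : ℝ) (f : V → ℝ) (R : ℝ) (x : V) : ℝ≥0∞ :=
  ⨆ (r : ℝ) (_ : 0 < r) (_ : r < R),
    pEnergy G p (gBall G x r) f / ((gBall G x r).ncard : ℝ≥0∞)

/-- The two-point estimate `TP_p(β)` with constant `CTP`. -/
def TPineq (G : SimpleGraph V) (p β CTP : ℝ) : Prop :=
  ∀ (z : V) (R : ℝ), 1 ≤ R → ∀ f : V → ℝ,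
    ∀ x ∈ gBall G z (CTP⁻¹ * R), ∀ y ∈ gBall G z (CTP⁻¹ * R),
      ENNReal.ofReal (|f x - f y| ^ p) ≤
        ENNReal.ofReal (CTP * R ^ β) * (maxEnergy G p f R x + maxEnergy G p f R y)

/-- The volume growth condition `VD(α)` with constant `CD`. -/
def VDgrowth (G : SimpleGraph V) (α CD : ℝ) : Prop :=
  ∀ (x y : V) (r R : ℝ), 1 ≤ r → r ≤ R →
    (gBall G x R).Finite ∧
      ((gBall G x R).ncard : ℝ) ≤
        CD * (((G.dist x y : ℝ) + R) / r) ^ α * ((gBall G y r).ncard : ℝ)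

/-- `d_f`-Ahlfors regularity of the graph `AR(d_f)` with constant `CAR`. -/
def ARreg (G : SimpleGraph V) (df CAR : ℝ) : Prop :=
  ∀ (x : V) (R : ℝ), 1 ≤ R → ENNReal.ofReal R ≤ gDiam G Set.univ →
    (gBall G x R).Finite ∧
      CAR⁻¹ * R ^ df ≤ ((gBall G x R).ncard : ℝ) ∧
      ((gBall G x R).ncard : ℝ) ≤ CAR * R ^ df

/-- Discrete `p`-capacity `cap_p(A₀, A₁; A₂)`. -/
noncomputable def pCap (G : SimpleGraph V) (p : ℝ) (A₀ A₁ A₂ : Set V) : ℝ≥0∞ :=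
  ⨅ (f : V → ℝ) (_ : ∀ x ∈ A₀, f x = 0) (_ : ∀ x ∈ A₁, f x = 1), pEnergy G p A₂ f

/-- The capacity upper bound `cap_{p,≤}(β)` with constants `Ccap`, `Acap`. -/
def CapUB (G : SimpleGraph V) (p β Ccap Acap : ℝ) : Prop :=
  ∀ (x : V) (R : ℝ), 1 ≤ R →
    ENNReal.ofReal (Acap * R) < gDiam G Set.univ →
    pCap G p (gBall G x R) ((gBall G x (2 * R))ᶜ) Set.univ ≤
      ENNReal.ofReal (Ccap * ((gBall G x R).ncard : ℝ) / R ^ β)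

/-- The discrete `p`-Laplacian. -/
noncomputable def pLap (G : SimpleGraph V) (p : ℝ) (f : V → ℝ) (x : V) : ℝ :=
  (∑ᶠ y ∈ G.neighborSet x, Real.sign (f y - f x) * |f y - f x| ^ (p - 1)) /
    ((G.neighborSet x).ncard : ℝ)

/-- The graph closure `Ā = A ∪ ∂A` of a vertex set. -/
def vClosure (G : SimpleGraph V) (A : Set V) : Set V :=
  A ∪ {x | ∃ y ∈ A, G.Adj x y}

/-- Real-valued sum of a symmetric function over the unordered edges within `A`. -/
noncomputable def edgeSum (G : SimpleGraph V) (A : Set V) (F : V → V → ℝ) : ℝ :=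
  (∑' e : {e : V × V // G.Adj e.1 e.2 ∧ e.1 ∈ A ∧ e.2 ∈ A}, F e.1.1 e.1.2) / 2

/-- The signed `p`-energy pairing `𝔈_p^G(f; g)`. -/
noncomputable def pEnergySigned (G : SimpleGraph V) (p : ℝ) (f g : V → ℝ) : ℝ :=
  edgeSum G Set.univ (fun x y => Real.sign (f y - f x) * |f y - f x| ^ (p - 1) * (g y - g x))

/-- Real-valued discrete `p`-energy `𝔈_p^G(f)`. -/
noncomputable def pEnergyReal (G : SimpleGraph V) (p : ℝ) (f : V → ℝ) : ℝ :=
  edgeSum G Set.univ (fun x y => |f x - f y| ^ p)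

end Paper

/-!
Cover `B(x, δR)` by the balls `B(y, εR)` centred at a maximal `εR`-separated subset `S` of
`B(x, δR)`, where `δ + 2ε ≤ 1`. The positive part of the pointwise minimum of near-optimal
potentials for the annuli `B(y, εR) ⊂ B(y, 2εR)` is admissible for `B(x, δR) ⊂ B(x, R)`, so by
`cap_{p,≤}(β)` and `AR(d_f)` the capacity is at most `#S · Ccap · CAR (εR)^d_f / (εR)^β`. The balls
`B(y, εR/2)`, `y ∈ S`, are disjoint and lie in `B(x, R)`, whence `#S ≲ ε^(-d_f)`; and
`R^d_f ≲ δ^(-d_f) #B(x, δR)`. When `εR < 2`, the radius `R < 2/ε` is bounded and the indicator of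
`V ∖ B(x, R)`, whose energy is at most `deg · #B(x, R) ≲ 1`, is a good enough test function.
-/

namespace Paper

variable {V : Type*} {G : SimpleGraph V} {p : ℝ}

section Capacity

variable {A₀ A₁ A₂ : Set V}

theorem pCap_le_pEnergy (f : V → ℝ) (h₀ : ∀ v ∈ A₀, f v = 0) (h₁ : ∀ v ∈ A₁, f v = 1) :
    pCap G p A₀ A₁ A₂ ≤ pEnergy G p A₂ f :=
  (iInf_le _ f).trans <| (iInf_le _ h₀).trans <| iInf_le _ h₁

theorem exists_pEnergy_lt_of_pCap_lt {c : ℝ≥0∞} (h : pCap G p A₀ A₁ A₂ < c) :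
    ∃ f : V → ℝ, (∀ v ∈ A₀, f v = 0) ∧ (∀ v ∈ A₁, f v = 1) ∧ pEnergy G p A₂ f < c := by
  simpa only [pCap, iInf_lt_iff, exists_prop] using h

theorem pEnergy_const (hp : p ≠ 0) (A : Set V) (c : ℝ) : pEnergy G p A (fun _ => c) = 0 := by
  simp [pEnergy, Real.zero_rpow hp]

theorem pCap_empty_right (hp : p ≠ 0) : pCap G p A₀ ∅ A₂ = 0 :=
  le_antisymm ((pCap_le_pEnergy (fun _ => 0) (fun _ _ => rfl) (by simp)).trans_eq
    (pEnergy_const hp _ _)) zero_le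

theorem pEnergy_le_of_abs_sub_le (hp : 0 ≤ p) (A : Set V) {f g : V → ℝ}
    (h : ∀ u v, G.Adj u v → |f u - f v| ≤ |g u - g v|) : pEnergy G p A f ≤ pEnergy G p A g :=
  ENNReal.div_le_div_right (ENNReal.tsum_le_tsum fun e =>
    ENNReal.ofReal_le_ofReal (Real.rpow_le_rpow (abs_nonneg _) (h _ _ e.2.1) hp)) 2

theorem _root_.Finset.exists_mem_abs_inf'_sub_inf'_le {ι α : Type*} [AddCommGroup α]
    [LinearOrder α] [IsOrderedAddMonoid α] (s : Finset ι) (hs : s.Nonempty) (f g : ι → α) :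
    ∃ i ∈ s, |s.inf' hs f - s.inf' hs g| ≤ |f i - g i| := by
  rcases le_total (s.inf' hs f) (s.inf' hs g) with h | h
  · obtain ⟨i, hi, hfi⟩ := s.exists_mem_eq_inf' hs f
    refine ⟨i, hi, ?_⟩
    rw [abs_sub_comm, abs_of_nonneg (sub_nonneg.2 h), hfi, abs_sub_comm]
    exact (sub_le_sub_right (Finset.inf'_le _ hi) _).trans (le_abs_self _)
  · obtain ⟨j, hj, hgj⟩ := s.exists_mem_eq_inf' hs g
    refine ⟨j, hj, ?_⟩
    rw [abs_of_nonneg (sub_nonneg.2 h), hgj]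
    exact (sub_le_sub_right (Finset.inf'_le _ hj) _).trans (le_abs_self _)

theorem pEnergy_inf'_le_sum {ι : Type*} (hp : 0 ≤ p) (A : Set V) (s : Finset ι) (hs : s.Nonempty)
    (F : ι → V → ℝ) :
    pEnergy G p A (fun v => s.inf' hs fun i => F i v) ≤ ∑ i ∈ s, pEnergy G p A (F i) := by
  simp only [pEnergy, ENNReal.div_eq_inv_mul, ← Finset.mul_sum]
  gcongr
  rw [← Summable.tsum_finsetSum fun i _ => ENNReal.summable]
  refine ENNReal.tsum_le_tsum fun e => ?_
  obtain ⟨i, hi, hle⟩ := s.exists_mem_abs_inf'_sub_inf'_le hs (F · e.1.1) (F · e.1.2)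
  exact (ENNReal.ofReal_le_ofReal (Real.rpow_le_rpow (abs_nonneg _) hle hp)).trans
    (Finset.single_le_sum (f := fun j => ENNReal.ofReal (|F j e.1.1 - F j e.1.2| ^ p))
      (fun _ _ => zero_le) hi)

theorem pCap_le_sum {ι : Type*} (hp : 0 ≤ p) (s : Finset ι) (hs : s.Nonempty) {B D : ι → Set V}
    (h₀ : A₀ ⊆ ⋃ i ∈ s, B i) (h₁ : ∀ i ∈ s, A₁ ⊆ D i) :
    pCap G p A₀ A₁ A₂ ≤ ∑ i ∈ s, pCap G p (B i) (D i) A₂ := by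
  refine ENNReal.le_of_forall_pos_le_add fun η hη hfin => ?_
  have hη' : (η : ℝ≥0∞) / s.card ≠ 0 :=
    ENNReal.div_ne_zero.2 ⟨by exact_mod_cast hη.ne', ENNReal.natCast_ne_top _⟩
  have hlt : ∀ i ∈ s, pCap G p (B i) (D i) A₂ < pCap G p (B i) (D i) A₂ + η / s.card :=
    fun i hi => ENNReal.lt_add_right (ENNReal.sum_lt_top.1 hfin i hi).ne hη'
  choose! f hf₀ hf₁ hfE using fun i hi => exists_pEnergy_lt_of_pCap_lt (hlt i hi)
  set g : V → ℝ := fun v => max (s.inf' hs fun i => f i v) 0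
  have hg₀ : ∀ v ∈ A₀, g v = 0 := by
    intro v hv
    obtain ⟨i, hi, hvi⟩ := Set.mem_iUnion₂.1 (h₀ hv)
    exact max_eq_right ((Finset.inf'_le _ hi).trans_eq (hf₀ i hi v hvi))
  have hg₁ : ∀ v ∈ A₁, g v = 1 := by
    intro v hv
    have hinf : (s.inf' hs fun i => f i v) = 1 :=
      le_antisymm (let ⟨i, hi⟩ := hs; (Finset.inf'_le _ hi).trans_eq (hf₁ i hi v (h₁ i hi hv)))
        (Finset.le_inf' _ _ fun i hi => (hf₁ i hi v (h₁ i hi hv)).ge)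
    simp [g, hinf]
  calc pCap G p A₀ A₁ A₂ ≤ pEnergy G p A₂ g := pCap_le_pEnergy g hg₀ hg₁
    _ ≤ pEnergy G p A₂ (fun v => s.inf' hs fun i => f i v) :=
        pEnergy_le_of_abs_sub_le hp A₂ fun _ _ _ => abs_max_sub_max_le_abs _ _ _
    _ ≤ ∑ i ∈ s, pEnergy G p A₂ (f i) := pEnergy_inf'_le_sum hp A₂ s hs f
    _ ≤ ∑ i ∈ s, (pCap G p (B i) (D i) A₂ + η / s.card) :=
        Finset.sum_le_sum fun i hi => (hfE i hi).le
    _ = ∑ i ∈ s, pCap G p (B i) (D i) A₂ + s.card * (η / s.card) := by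
        rw [Finset.sum_add_distrib, Finset.sum_const, nsmul_eq_mul]
    _ ≤ ∑ i ∈ s, pCap G p (B i) (D i) A₂ + η := by gcongr; exact ENNReal.mul_div_le

theorem pCap_le_mul_card (hp : 0 < p) {D : ℕ} (hD : DegLE G D) (W : Finset V) (h₀ : A₀ ⊆ W)
    (h₁ : A₁ ⊆ (↑W)ᶜ) : pCap G p A₀ A₁ A₂ ≤ D * W.card := by
  classical
  set f : V → ℝ := Set.indicator (↑W)ᶜ 1
  set N : V → Finset V := fun w => (hD w).1.toFinset
  -- the ordered edges with an endpoint in `W`, the only ones along which `f` jumps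
  set T : Finset (V × V) :=
    W.biUnion fun w => (N w).image (fun u => (w, u)) ∪ (N w).image (fun u => (u, w))
  have hT : T.card ≤ W.card * (2 * D) := by
    refine Finset.card_biUnion_le_card_mul _ _ _ fun w _ => (Finset.card_union_le _ _).trans ?_
    have hN : (N w).card ≤ D := by rw [← Set.ncard_eq_toFinset_card _ (hD w).1]; exact (hD w).2
    grw [Finset.card_image_le, Finset.card_image_le, hN, two_mul]
  have hjump : ∀ u v, G.Adj u v → f u ≠ f v → (u, v) ∈ T := by
    intro u v huv hne
    by_cases hu : u ∈ W
    · exact Finset.mem_biUnion.2 ⟨u, hu, Finset.mem_union_left _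
        (Finset.mem_image.2 ⟨v, by simpa [N] using huv, rfl⟩)⟩
    by_cases hv : v ∈ W
    · exact Finset.mem_biUnion.2 ⟨v, hv, Finset.mem_union_right _
        (Finset.mem_image.2 ⟨u, by simpa [N] using huv.symm, rfl⟩)⟩
    simp [f, hu, hv] at hne
  set P : V × V → Prop := fun e => G.Adj e.1 e.2 ∧ e.1 ∈ A₂ ∧ e.2 ∈ A₂
  have hsum : ∑' e : Subtype P, ENNReal.ofReal (|f e.1.1 - f e.1.2| ^ p) ≤ T.card := by
    rw [tsum_eq_sum (s := T.subtype P)]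
    · refine (Finset.sum_le_card_nsmul _ _ 1 fun e _ => ?_).trans ?_
      · refine ENNReal.ofReal_le_one.2 (Real.rpow_le_one (abs_nonneg _) ?_ hp.le)
        simp only [f, Set.indicator, Pi.one_apply]
        split_ifs <;> norm_num
      · simpa [Finset.card_subtype] using Finset.card_filter_le T P
    · intro e he
      have : f e.1.1 = f e.1.2 := by
        by_contra hne; exact he (Finset.mem_subtype.2 (hjump _ _ e.2.1 hne))
      simp [this, Real.zero_rpow hp.ne']
  calc pCap G p A₀ A₁ A₂ ≤ pEnergy G p A₂ f :=
        pCap_le_pEnergy f (fun v hv => Set.indicator_of_notMem (not_not.2 (h₀ hv)) _)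
          (fun v hv => Set.indicator_of_mem (h₁ hv) _)
    _ ≤ D * W.card := by
        refine ENNReal.div_le_of_le_mul (hsum.trans ?_)
        rw [mul_assoc, mul_comm (W.card : ℝ≥0∞), ← mul_assoc, mul_comm _ 2]
        exact_mod_cast hT.trans_eq (by ring)

end Capacity

section Balls

variable {x y : V} {r s : ℝ}

theorem mem_gBall_self (hr : 0 < r) : x ∈ gBall G x r := by
  simpa [gBall] using hr

theorem gBall_subset_gBall (hG : G.Connected) (h : (G.dist x y : ℝ) + r ≤ s) :
    gBall G y r ⊆ gBall G x s := fun z (hz : (G.dist y z : ℝ) < r) => by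
  have : (G.dist x z : ℝ) ≤ G.dist x y + G.dist y z := by exact_mod_cast hG.dist_triangle
  show (G.dist x z : ℝ) < s
  linarith

theorem gBall_mono (h : r ≤ s) : gBall G x r ⊆ gBall G x s :=
  fun _ (hz : (G.dist x _ : ℝ) < r) => hz.trans_le h

theorem ofReal_le_gDiam (h : r ≤ G.dist x y) : ENNReal.ofReal r ≤ gDiam G Set.univ := by
  refine (ENNReal.ofReal_le_ofReal h).trans ?_
  rw [ENNReal.ofReal_natCast]
  exact le_iSup₂_of_le x (Set.mem_univ _) (le_iSup₂_of_le y (Set.mem_univ _) le_rfl)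

theorem degLE_of_ARreg {df CAR : ℝ} (hAR : ARreg G df CAR)
    (hdiam : ENNReal.ofReal 2 ≤ gDiam G Set.univ) : DegLE G ⌊CAR * 2 ^ df⌋₊ := by
  intro v
  obtain ⟨hfin, -, hle⟩ := hAR v 2 one_le_two hdiam
  have hsub : G.neighborSet v ⊆ gBall G v 2 := fun u hu => by
    simp [gBall, SimpleGraph.dist_eq_one_iff_adj.2 hu]
  exact ⟨hfin.subset hsub, Nat.le_floor ((Nat.cast_le.2 (Set.ncard_le_ncard hsub hfin)).trans hle)⟩

theorem exists_finset_separated_net {A : Set V} (hA : A.Finite) (hr : 0 < r) :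
    ∃ S : Finset V, ↑S ⊆ A ∧ (S : Set V).Pairwise (fun a b => r ≤ G.dist a b) ∧
      ∀ z ∈ A, ∃ y ∈ S, (G.dist y z : ℝ) < r := by
  classical
  obtain ⟨S, hSmax⟩ := (hA.toFinset.powerset.filter
    fun S : Finset V => (S : Set V).Pairwise (fun a b => r ≤ G.dist a b)).exists_maximal
      ⟨∅, by simp⟩
  simp only [Finset.mem_filter, Finset.mem_powerset] at hSmax
  obtain ⟨⟨hSA, hSsep⟩, hmax⟩ := hSmax
  refine ⟨S, fun z hz => by simpa using hSA hz, hSsep, fun z hz => ?_⟩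
  by_contra! hfar
  have hzS : z ∉ S := fun hzS => by simpa [hr.not_ge] using hfar z hzS
  have hins := @hmax (insert z S) ⟨Finset.insert_subset (by simpa using hz) hSA, by
    rw [Finset.coe_insert, Set.pairwise_insert]
    exact ⟨hSsep, fun b hb _ => ⟨by rw [G.dist_comm]; exact hfar b hb, hfar b hb⟩⟩⟩
    (Finset.subset_insert z S)
  exact hzS (hins (Finset.mem_insert_self z S))

theorem sum_ncard_gBall_le (hG : G.Connected) {S : Finset V} {ρ : ℝ}
    (hS : (S : Set V).Pairwise fun a b => r ≤ G.dist a b) (hSx : ↑S ⊆ gBall G x ρ)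
    (hfin : (gBall G x (ρ + r / 2)).Finite) :
    ∑ y ∈ S, (gBall G y (r / 2)).ncard ≤ (gBall G x (ρ + r / 2)).ncard := by
  have hsub : ∀ y ∈ S, gBall G y (r / 2) ⊆ gBall G x (ρ + r / 2) := fun y hy =>
    gBall_subset_gBall hG (by have : (G.dist x y : ℝ) < ρ := hSx hy; linarith)
  have hdisj : (S : Set V).PairwiseDisjoint fun y => gBall G y (r / 2) := by
    intro a ha b hb hab
    refine Set.disjoint_left.2 fun z (hza : (G.dist a z : ℝ) < r / 2)
      (hzb : (G.dist b z : ℝ) < r / 2) => ?_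
    have : (G.dist a b : ℝ) ≤ G.dist a z + G.dist b z := by
      rw [G.dist_comm (u := b)]; exact_mod_cast hG.dist_triangle
    linarith [hS ha hb hab]
  rw [← finsum_mem_coe_finset, ← S.finite_toSet.ncard_biUnion
    (fun y hy => hfin.subset (hsub y hy)) hdisj]
  exact Set.ncard_le_ncard (Set.iUnion₂_subset hsub) hfin

end Balls

section Annuli

variable {df β CAR Ccap Acap δ ε R : ℝ} {x y : V}

theorem pCap_gBall_compl_le_sum (hG : G.Connected) (hp : 0 ≤ p) {A : Set V} {ρ r : ℝ}
    {S : Finset V} (hS : S.Nonempty) (hSx : ↑S ⊆ gBall G x ρ)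
    (hcov : ∀ z ∈ gBall G x ρ, ∃ y ∈ S, (G.dist y z : ℝ) < r) (hR : ρ + 2 * r ≤ R) :
    pCap G p (gBall G x ρ) (gBall G x R)ᶜ A ≤
      ∑ y ∈ S, pCap G p (gBall G y r) (gBall G y (2 * r))ᶜ A :=
  pCap_le_sum hp S hS (fun z hz => let ⟨y, hy, hyz⟩ := hcov z hz; Set.mem_biUnion hy hyz)
    fun y hy => Set.compl_subset_compl.2 <| gBall_subset_gBall hG <| by
      have : (G.dist x y : ℝ) < ρ := hSx hy
      linarith

theorem card_mul_rpow_le_of_pairwise_le_dist (hG : G.Connected) (hAR : ARreg G df CAR)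
    (hCAR : 0 < CAR) {S : Finset V} {ρ r : ℝ} (hS : (S : Set V).Pairwise fun a b => r ≤ G.dist a b)
    (hSx : ↑S ⊆ gBall G x ρ) (hρ : 0 ≤ ρ) (hr : 2 ≤ r) (hρR : ρ + r / 2 ≤ R)
    (hdiam : ENNReal.ofReal R ≤ gDiam G Set.univ) :
    (S.card : ℝ) * (r / 2) ^ df ≤ CAR ^ 2 * R ^ df := by
  have hr2 : 1 ≤ r / 2 := by linarith
  obtain ⟨hfinR, -, hupR⟩ := hAR x R (by linarith) hdiam
  have hdiam' : ENNReal.ofReal (r / 2) ≤ gDiam G Set.univ :=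
    (ENNReal.ofReal_le_ofReal (by linarith)).trans hdiam
  have hlow : ∀ y ∈ S, (r / 2) ^ df ≤ CAR * (gBall G y (r / 2)).ncard := fun y _ => by
    rw [← inv_mul_le_iff₀ hCAR]; exact (hAR y _ hr2 hdiam').2.1
  have hpack : ∑ y ∈ S, ((gBall G y (r / 2)).ncard : ℝ) ≤ (gBall G x R).ncard := by
    exact_mod_cast (sum_ncard_gBall_le hG hS hSx (hfinR.subset (gBall_mono hρR))).trans
      (Set.ncard_le_ncard (gBall_mono hρR) hfinR)
  calc (S.card : ℝ) * (r / 2) ^ df = ∑ _y ∈ S, (r / 2) ^ df := by simp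
    _ ≤ ∑ y ∈ S, CAR * (gBall G y (r / 2)).ncard := Finset.sum_le_sum hlow
    _ ≤ CAR * (CAR * R ^ df) := by
        rw [← Finset.mul_sum]; gcongr; exact hpack.trans hupR
    _ = CAR ^ 2 * R ^ df := by ring

theorem pCap_gBall_compl_le_of_ARreg {r : ℝ} (hAR : ARreg G df CAR)
    (hCap : CapUB G p β Ccap Acap) (hCcap : 0 ≤ Ccap) (hr : 1 ≤ r)
    (hAr : ENNReal.ofReal (Acap * r) < gDiam G Set.univ)
    (hrdiam : ENNReal.ofReal r ≤ gDiam G Set.univ) :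
    pCap G p (gBall G y r) (gBall G y (2 * r))ᶜ Set.univ ≤
      ENNReal.ofReal (Ccap * (CAR * r ^ df) / r ^ β) := by
  refine (hCap y r hr hAr).trans (ENNReal.ofReal_le_ofReal ?_)
  gcongr
  exact (hAR y r hr hrdiam).2.2

theorem pCap_annulus_le_of_two_le_mul (hG : G.Connected) (hAR : ARreg G df CAR)
    (hCap : CapUB G p β Ccap Acap) (hp : 0 ≤ p) (hCAR : 0 < CAR) (hCcap : 0 ≤ Ccap) (hδ : 0 < δ)
    (hε : 0 < ε) (hεδ : δ + 2 * ε ≤ 1) (hεA : Acap * ε < 1) (hδR : 1 ≤ δ * R) (hεR : 2 ≤ ε * R)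
    (hRy : R ≤ G.dist x y) :
    pCap G p (gBall G x (δ * R)) (gBall G x R)ᶜ Set.univ ≤
      ENNReal.ofReal (Ccap * CAR ^ 4 * 2 ^ df / (δ ^ df * ε ^ β) *
        (gBall G x (δ * R)).ncard / R ^ β) := by
  set r := ε * R
  have hR : 0 < R := pos_of_mul_pos_right (by linarith) hε.le
  have hdiam : ∀ s ≤ R, ENNReal.ofReal s ≤ gDiam G Set.univ := fun s hs =>
    ofReal_le_gDiam (hs.trans hRy)
  obtain ⟨hfinδ, hlowδ, -⟩ := hAR x (δ * R) hδR (hdiam _ (by nlinarith))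
  obtain ⟨S, hSx, hSsep, hScov⟩ := exists_finset_separated_net hfinδ (G := G) (r := r) (by linarith)
  have hS : S.Nonempty := let ⟨y, hy, _⟩ := hScov x (mem_gBall_self (by linarith)); ⟨y, hy⟩
  have hcap : ∀ y ∈ S, pCap G p (gBall G y r) (gBall G y (2 * r))ᶜ Set.univ ≤
      ENNReal.ofReal (Ccap * (CAR * r ^ df) / r ^ β) := fun y _ =>
    pCap_gBall_compl_le_of_ARreg hAR hCap hCcap (by linarith)
      (((ENNReal.ofReal_lt_ofReal_iff hR).2 (by nlinarith)).trans_le (hdiam R le_rfl))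
      (hdiam r (by nlinarith))
  have hcount := card_mul_rpow_le_of_pairwise_le_dist hG hAR hCAR hSsep hSx (by positivity) hεR
    (by nlinarith) (hdiam R le_rfl)
  calc pCap G p (gBall G x (δ * R)) (gBall G x R)ᶜ Set.univ
      ≤ ∑ y ∈ S, pCap G p (gBall G y r) (gBall G y (2 * r))ᶜ Set.univ :=
        pCap_gBall_compl_le_sum hG hp hS hSx hScov (by nlinarith)
    _ ≤ ∑ _y ∈ S, ENNReal.ofReal (Ccap * (CAR * r ^ df) / r ^ β) := Finset.sum_le_sum hcap
    _ = ENNReal.ofReal (S.card * (Ccap * (CAR * r ^ df) / r ^ β)) := by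
        rw [Finset.sum_const, nsmul_eq_mul, ENNReal.ofReal_mul (by positivity),
          ENNReal.ofReal_natCast]
    _ ≤ _ := ENNReal.ofReal_le_ofReal ?_
  have hr2 : r ^ df = 2 ^ df * (r / 2) ^ df := by
    rw [← Real.mul_rpow (by norm_num) (by positivity), mul_div_cancel₀ _ two_ne_zero]
  have hrβ : r ^ β = ε ^ β * R ^ β := Real.mul_rpow hε.le hR.le
  have hRdf : δ ^ df * R ^ df ≤ CAR * (gBall G x (δ * R)).ncard := by
    rw [← Real.mul_rpow hδ.le hR.le, ← inv_mul_le_iff₀ hCAR]; exact hlowδ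
  have hεβ : 0 < ε ^ β * R ^ β := by positivity
  have hδdf : 0 < δ ^ df := by positivity
  calc S.card * (Ccap * (CAR * r ^ df) / r ^ β)
      = Ccap * CAR * 2 ^ df * (S.card * (r / 2) ^ df) / (ε ^ β * R ^ β) := by
        rw [hr2, hrβ]; ring
    _ ≤ Ccap * CAR * 2 ^ df * (CAR ^ 2 * R ^ df) / (ε ^ β * R ^ β) := by gcongr
    _ = Ccap * CAR ^ 3 * 2 ^ df / (δ ^ df * ε ^ β) * (δ ^ df * R ^ df) / R ^ β := by
        field_simp
    _ ≤ Ccap * CAR ^ 3 * 2 ^ df / (δ ^ df * ε ^ β) * (CAR * (gBall G x (δ * R)).ncard) /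
        R ^ β := by gcongr
    _ = _ := by ring

theorem pCap_annulus_le_of_le (hAR : ARreg G df CAR) (hp : 0 < p) (hCAR : 0 < CAR) (hdf : 0 ≤ df)
    (hβ : 0 ≤ β) {R₀ : ℝ} (hδ : 0 < δ) (hδ1 : δ < 1) (hδR : 1 ≤ δ * R) (hRy : R ≤ G.dist x y)
    (hR₀ : R ≤ R₀) :
    pCap G p (gBall G x (δ * R)) (gBall G x R)ᶜ Set.univ ≤
      ENNReal.ofReal (CAR ^ 2 * 2 ^ df * R₀ ^ df * R₀ ^ β * (gBall G x (δ * R)).ncard / R ^ β) := by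
  have hR : 1 < R := by nlinarith
  have hdist : 1 < G.dist x y := by exact_mod_cast hR.trans_le hRy
  have hdeg := degLE_of_ARreg hAR (ofReal_le_gDiam (x := x) (y := y) (by exact_mod_cast hdist))
  obtain ⟨hfinR, -, hupR⟩ := hAR x R hR.le (ofReal_le_gDiam hRy)
  obtain ⟨hfinδ, -, -⟩ := hAR x (δ * R) hδR (ofReal_le_gDiam (by nlinarith))
  have hn : (1 : ℝ) ≤ (gBall G x (δ * R)).ncard :=
    Nat.one_le_cast.2 ((Set.ncard_pos hfinδ).2 ⟨x, mem_gBall_self (by linarith)⟩)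
  have hRβ : 1 ≤ R₀ ^ β / R ^ β :=
    (one_le_div (by positivity)).2 (Real.rpow_le_rpow (by linarith) hR₀ hβ)
  refine (pCap_le_mul_card hp hdeg hfinR.toFinset (by simpa using gBall_mono (by nlinarith))
    (by simp)).trans ?_
  rw [← Set.ncard_eq_toFinset_card _ hfinR, ← ENNReal.ofReal_natCast, ← ENNReal.ofReal_natCast,
    ← ENNReal.ofReal_mul (by positivity)]
  refine ENNReal.ofReal_le_ofReal ?_
  calc (⌊CAR * 2 ^ df⌋₊ : ℝ) * (gBall G x R).ncard ≤ CAR * 2 ^ df * (CAR * R ^ df) := by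
        gcongr
        · exact Nat.floor_le (by positivity)
    _ = CAR ^ 2 * 2 ^ df * R ^ df * 1 := by ring
    _ ≤ CAR ^ 2 * 2 ^ df * R₀ ^ df * (R₀ ^ β / R ^ β * (gBall G x (δ * R)).ncard) := by
        have hR₀df : 0 ≤ R₀ ^ df := Real.rpow_nonneg (by linarith) df
        refine mul_le_mul (by gcongr)
          (one_le_mul_of_one_le_of_one_le hRβ hn) zero_le_one (by positivity)
    _ = _ := by ring

end Annuli

end Paper

/-- Lemma `lem.cap`: capacity upper bounds across general annuli.
Let `p ∈ (1,∞)`, `d_f ≥ 1`, `β > 0`, and assume `G` satisfies `AR(d_f)` and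
`cap_{p,≤}(β)`. Then for every `δ ∈ (0,1)` there is `C(δ) > 0`, depending only on
`δ, p, d_f, β` and the constants of `AR(d_f)` and `cap_{p,≤}(β)`, such that
`cap_p(B(x,δR), V∖B(x,R)) ≤ C(δ)·#B(x,δR)/R^β` for all `x ∈ V` and `R ≥ δ⁻¹`. -/
theorem statement10 (p df β : ℝ) (hp : 1 < p) (hdf : 1 ≤ df) (hβ : 0 < β)
    (CAR Ccap Acap : ℝ) (hCAR : 1 ≤ CAR) (hCcap : 0 < Ccap) (hAcap : 1 ≤ Acap)
    (δ : ℝ) (hδ : δ ∈ Set.Ioo (0 : ℝ) 1) :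
    ∃ C : ℝ, 0 < C ∧
      ∀ (V : Type) (G : SimpleGraph V),
        G.Connected → Paper.LocFin G →
        Paper.ARreg G df CAR → Paper.CapUB G p β Ccap Acap →
        ∀ (x : V) (R : ℝ), δ⁻¹ ≤ R →
          Paper.pCap G p (Paper.gBall G x (δ * R)) ((Paper.gBall G x R)ᶜ) Set.univ ≤
            ENNReal.ofReal (C * ((Paper.gBall G x (δ * R)).ncard : ℝ) / R ^ β) := by
  obtain ⟨hδ0, hδ1⟩ := hδ
  -- `ε R` is the radius of the small balls; `ε ≤ 1 / (2 Acap)` makes `cap_{p,≤}(β)` applicable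
  set ε := min ((1 - δ) / 2) (2 * Acap)⁻¹
  have hε : 0 < ε := lt_min (by linarith) (by positivity)
  have hεδ : δ + 2 * ε ≤ 1 := by linarith [min_le_left ((1 - δ) / 2) (2 * Acap)⁻¹]
  have hεA : Acap * ε < 1 := by
    calc Acap * ε ≤ Acap * (2 * Acap)⁻¹ := by gcongr; exact min_le_right _ _
      _ < 1 := by field_simp; norm_num
  set C₁ := Ccap * CAR ^ 4 * 2 ^ df / (δ ^ df * ε ^ β)
  set C₂ := CAR ^ 2 * 2 ^ df * (2 / ε) ^ df * (2 / ε) ^ β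
  refine ⟨max C₁ C₂, lt_max_of_lt_left (by positivity), fun V G hG _ hAR hCap x R hR => ?_⟩
  have hδR : 1 ≤ δ * R := by rwa [inv_le_iff_one_le_mul₀' hδ0] at hR
  obtain hempty | ⟨y, hy⟩ := ((Paper.gBall G x R)ᶜ).eq_empty_or_nonempty
  · simp [hempty, Paper.pCap_empty_right (by linarith : p ≠ 0)]
  have hRy : R ≤ G.dist x y := not_lt.1 hy
  have hRβ : 0 ≤ R ^ β := Real.rpow_nonneg (by nlinarith) β
  rcases le_or_gt 2 (ε * R) with hεR | hεR
  · refine (Paper.pCap_annulus_le_of_two_le_mul hG hAR hCap (by linarith) (by linarith) hCcap.le hδ0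
      hε hεδ hεA hδR hεR hRy).trans (ENNReal.ofReal_le_ofReal ?_)
    gcongr
    exact le_max_left _ _
  · refine (Paper.pCap_annulus_le_of_le hAR (by linarith) (by linarith) (by linarith) hβ.le hδ0
      hδ1 hδR hRy (R₀ := 2 / ε) (by rw [le_div_iff₀ hε]; linarith)).trans
      (ENNReal.ofReal_le_ofReal ?_)
    gcongr
    exact le_max_right _ _
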